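/- The probability of an unordered sample without replacement admits the closed form p(S) = ∑_{C ⊆ S} (-1)^{|C|} (1 - ∑_{i∈S} p(i)) / (1 - ∑_{i∈S\C} p(i)), an inclusion–exclusion sum over 2^{|S|} subsets. -/

import Mathlib

/-!
Conditioning on the first draw gives the recurrence
`setProb p t S = ∑ b ∈ S, p b / t * setProb p (t - p b) (S.erase b)`.
The inclusion–exclusion sum satisfies the same recurrence: after exchanging the two sums, the
terms belonging to a fixed `C ⊆ S` collect to `σ / t * A / (t - σ) = A / (t - σ) - A / t` with
`σ = ∑ i ∈ S \ C, p i`, and the `A / t` parts cancel in the alternating sum over `C`.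
Only differences between `t` and sub-sums of `S` are ever inverted, so the identity holds as soon
as no sub-sum of `S` equals `t`.
-/

open Finset MeasureTheory

variable {α : Type*}

/-- Probability of drawing the ordered sample `B` sequentially without replacement
from (unnormalized) weights `p`, when `t` is the total remaining probability mass. -/
noncomputable def ordProb (p : α → ℝ) : ℝ → List α → ℝ
  | _, [] => 1
  | t, b :: L => (p b / t) * ordProb p (t - p b) L

/-- Probability of drawing the unordered sample `S` without replacement:
sum of `ordProb` over all orderings of `S`. -/
noncomputable def setProb (p : α → ℝ) (t : ℝ) (S : Finset α) : ℝ :=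
  (S.toList.permutations.map (ordProb p t)).sum

theorem List.permutations_perm_flatMap_erase [DecidableEq α] {l : List α} (hl : l.Nodup)
    (hne : l ≠ []) :
    l.permutations.Perm (l.flatMap fun b => (l.erase b).permutations.map (b :: ·)) := by
  refine (List.perm_ext_iff_of_nodup (List.nodup_permutations _ hl) ?_).2 ?_
  · refine List.nodup_flatMap.2 ⟨fun b _ => ?_, hl.imp fun hab => ?_⟩
    · exact (List.nodup_permutations _ (hl.erase b)).map List.cons_injective
    · simp_all [Function.onFun, List.disjoint_left, eq_comm]
  · rintro (_ | ⟨b, L⟩)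
    · simpa [List.mem_permutations, List.nil_perm] using hne
    · simp [List.mem_permutations, List.cons_perm_iff_perm_erase]

theorem List.sum_map_permutations_eq_sum_erase [DecidableEq α] {M : Type*} [AddCommMonoid M]
    (f : List α → M) {l : List α} (hl : l.Nodup) (hne : l ≠ []) :
    (l.permutations.map f).sum =
      ∑ b ∈ l.toFinset, ((l.erase b).permutations.map fun L => f (b :: L)).sum := by
  rw [((List.permutations_perm_flatMap_erase hl hne).map f).sum_eq, List.sum_toFinset _ hl]
  simp [List.flatMap, List.map_flatten, List.sum_flatten, Function.comp_def]

theorem setProb_eq_sum_erase [DecidableEq α] (p : α → ℝ) (t : ℝ) {S : Finset α}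
    (hS : S.Nonempty) :
    setProb p t S = ∑ b ∈ S, p b / t * setProb p (t - p b) (S.erase b) := by
  have hne : S.toList ≠ [] := by simpa using hS.ne_empty
  rw [setProb, List.sum_map_permutations_eq_sum_erase _ S.nodup_toList hne, toList_toFinset]
  refine sum_congr rfl fun b _ => ?_
  have hperm : (S.toList.erase b).Perm (S.erase b).toList := by
    rw [← Multiset.coe_eq_coe, ← Multiset.coe_erase, coe_toList, coe_toList, erase_val]
  simp only [ordProb, List.sum_map_mul_left, setProb, ((hperm.permutations).map _).sum_eq]

noncomputable def inclusionExclusionProb [DecidableEq α] (p : α → ℝ) (t : ℝ) (S : Finset α) :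
    ℝ :=
  ∑ C ∈ S.powerset, (-1 : ℝ) ^ C.card * ((t - ∑ i ∈ S, p i) / (t - ∑ i ∈ S \ C, p i))

theorem inclusionExclusionProb_sub_erase [DecidableEq α] (p : α → ℝ) (t : ℝ) {S : Finset α}
    {b : α} (hb : b ∈ S) :
    inclusionExclusionProb p (t - p b) (S.erase b) =
      ∑ C ∈ (S.erase b).powerset,
        (-1 : ℝ) ^ C.card * ((t - ∑ i ∈ S, p i) / (t - ∑ i ∈ S \ C, p i)) := by
  refine sum_congr rfl fun C hC => ?_
  have hbC : b ∈ S \ C := mem_sdiff.2 ⟨hb, fun h => by simpa using mem_powerset.1 hC h⟩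
  rw [sum_erase_eq_sub hb, erase_sdiff_comm, sum_erase_eq_sub hbC, sub_sub_sub_cancel_right,
    sub_sub_sub_cancel_right]

theorem sum_sum_powerset_erase_comm [DecidableEq α] {M : Type*} [AddCommMonoid M]
    (S : Finset α) (f : α → Finset α → M) :
    ∑ b ∈ S, ∑ C ∈ (S.erase b).powerset, f b C = ∑ C ∈ S.powerset, ∑ b ∈ S \ C, f b C :=
  sum_comm' fun b C => by
    simp only [mem_powerset, mem_sdiff, subset_erase]
    tauto

theorem inclusionExclusionProb_eq_sum_erase [DecidableEq α] (p : α → ℝ) {t : ℝ}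
    {S : Finset α} (hS : S.Nonempty) (h : ∀ C ⊆ S, ∑ i ∈ C, p i ≠ t) :
    inclusionExclusionProb p t S =
      ∑ b ∈ S, p b / t * inclusionExclusionProb p (t - p b) (S.erase b) := by
  have ht : t ≠ 0 := by simpa [eq_comm] using h ∅ (empty_subset S)
  have hterm : ∀ C ∈ S.powerset,
      ∑ b ∈ S \ C, p b / t * ((-1 : ℝ) ^ C.card * ((t - ∑ i ∈ S, p i) / (t - ∑ i ∈ S \ C, p i)))
        = (-1 : ℝ) ^ C.card * ((t - ∑ i ∈ S, p i) / (t - ∑ i ∈ S \ C, p i))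
          - (-1 : ℝ) ^ C.card * (t - ∑ i ∈ S, p i) / t := by
    intro C _
    have hden : t - ∑ i ∈ S \ C, p i ≠ 0 := sub_ne_zero.2 (h _ sdiff_subset).symm
    rw [← sum_mul, ← sum_div]
    field_simp
    ring
  have halt : ∑ C ∈ S.powerset, (-1 : ℝ) ^ C.card = 0 := by
    exact_mod_cast sum_powerset_neg_one_pow_card_of_nonempty hS
  symm
  calc ∑ b ∈ S, p b / t * inclusionExclusionProb p (t - p b) (S.erase b)
      = ∑ C ∈ S.powerset, ∑ b ∈ S \ C,
          p b / t * ((-1 : ℝ) ^ C.card * ((t - ∑ i ∈ S, p i) / (t - ∑ i ∈ S \ C, p i))) := by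
        rw [← sum_sum_powerset_erase_comm]
        exact sum_congr rfl fun b hb => by rw [inclusionExclusionProb_sub_erase p t hb, mul_sum]
    _ = inclusionExclusionProb p t S - (∑ C ∈ S.powerset, (-1 : ℝ) ^ C.card) *
          (t - ∑ i ∈ S, p i) / t := by
        rw [sum_congr rfl hterm, sum_sub_distrib, sum_mul, sum_div, inclusionExclusionProb]
    _ = inclusionExclusionProb p t S := by rw [halt, zero_mul, zero_div, sub_zero]

theorem setProb_eq_inclusionExclusionProb [DecidableEq α] (p : α → ℝ) {t : ℝ}
    (S : Finset α) (h : ∀ C ⊆ S, ∑ i ∈ C, p i ≠ t) :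
    setProb p t S = inclusionExclusionProb p t S := by
  induction S using Finset.strongInduction generalizing t with | H S ih => ?_
  rcases S.eq_empty_or_nonempty with rfl | hS
  · have ht : t ≠ 0 := by simpa [eq_comm] using h ∅ subset_rfl
    simp [setProb, ordProb, inclusionExclusionProb, ht]
  rw [setProb_eq_sum_erase p t hS, inclusionExclusionProb_eq_sum_erase p hS h]
  refine sum_congr rfl fun b hb => ?_
  -- a sub-sum of `S.erase b` hitting `t - p b` is a sub-sum of `S` hitting `t`
  refine congrArg _ (ih _ (erase_ssubset hb) fun C hC hCt => h (insert b C) ?_ ?_)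
  · exact insert_subset hb (hC.trans (erase_subset b S))
  · rw [sum_insert fun hbC => by simpa using hC hbC, hCt, add_sub_cancel]

theorem setProb_inclusion_exclusion_general [DecidableEq α] (D S : Finset α) (hS : S ⊆ D)
    (p : α → ℝ) (hp : ∀ x ∈ D, 0 < p x)
    (hmass : ∑ i ∈ S, p i < 1) :
    setProb p 1 S = ∑ C ∈ S.powerset, (-1 : ℝ) ^ C.card *
      ((1 - ∑ i ∈ S, p i) / (1 - ∑ i ∈ S \ C, p i)) := by
  refine setProb_eq_inclusionExclusionProb p S fun C hC => (lt_of_le_of_lt ?_ hmass).ne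
  exact sum_le_sum_of_subset_of_nonneg hC fun x hx _ => (hp x (hS hx)).le

theorem setProb_inclusion_exclusion [DecidableEq α] (D S : Finset α) (hS : S ⊆ D)
    (p : α → ℝ) (hp : ∀ x ∈ D, 0 < p x) (hsum : ∑ x ∈ D, p x = 1)
    (hmass : ∑ i ∈ S, p i < 1) :
    setProb p 1 S = ∑ C ∈ S.powerset, (-1 : ℝ) ^ C.card *
      ((1 - ∑ i ∈ S, p i) / (1 - ∑ i ∈ S \ C, p i)) :=
  setProb_inclusion_exclusion_general D S hS p hp hmass
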